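/- arXiv:1907.11365 — 3 statements merged into one kernel-verified Lean document; each statement's English description precedes it below -/
import Mathlib

section
/- Let σ, τ be commuting K-linear automorphisms of 𝒞ₙ such that [n] is a single στ-orbit, i.e., the subgroup of permutations of [n] generated by the object permutations of σ and τ acts transitively on [n]. Then for any good basis (x_{ij}) for (𝒞ₙ,σ), all transition coefficients a_{ij} of σ satisfy a_{ij}ⁿ = 1. -/
open CategoryTheory

/-- The category `𝒞ₙ`: objects are `Fin n`, every hom-space is the one-dimensional
`K`-vector space `K`, and composition is multiplication in `K` (so the identity of
every object is `1 : K`). -/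
def Cn (K : Type) (n : ℕ) : Type := Fin n

section CnSetup

variable {K : Type} [Field K] {n : ℕ}

instance : Category (Cn K n) where
  Hom _ _ := K
  id _ := (1 : K)
  comp f g := @HMul.hMul K K K _ f g
  id_comp f := @one_mul K _ f
  comp_id f := @mul_one K _ f
  assoc f g h := @mul_assoc K _ f g h

instance : Preadditive (Cn K n) where
  homGroup _ _ := inferInstanceAs (AddCommGroup K)
  add_comp _ _ _ f f' g := @add_mul K _ _ _ f f' g
  comp_add _ _ _ f g g' := @mul_add K _ _ _ f g g'

instance : CategoryTheory.Linear K (Cn K n) where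
  homModule _ _ := inferInstanceAs (Module K K)
  smul_comp _ _ _ r f g := @smul_mul_assoc K K _ _ _ r f g
  comp_smul _ _ _ f r g := @mul_smul_comm K K _ _ _ r f g

/-- The morphism `X ⟶ Y` of `𝒞ₙ` given by the scalar `r`.  In particular
`CnHom j i 1` is the canonical basic morphism `x_{ij} : j ⟶ i`. -/
def CnHom (X Y : Cn K n) (r : K) : X ⟶ Y := r

/-- The scalar underlying a morphism of `𝒞ₙ`. -/
def toK {X Y : Cn K n} (f : X ⟶ Y) : K := f

end CnSetup

/-- A functor between `K`-linear categories is `K`-linear if it is additive on hom-spaces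
and commutes with the action of `K` on hom-spaces. -/
def IsKLinearFunctor (K : Type) [Field K] {C D : Type*} [Category C] [Category D]
    [Preadditive C] [Preadditive D] [CategoryTheory.Linear K C] [CategoryTheory.Linear K D]
    (F : C ⥤ D) : Prop :=
  (∀ (X Y : C) (f g : X ⟶ Y), F.map (f + g) = F.map f + F.map g) ∧
  (∀ (X Y : C) (r : K) (f : X ⟶ Y), F.map (r • f) = r • F.map f)

/-- `i` and `j` lie in the same orbit of the permutation `π`. -/
def SameOrbit {N : ℕ} (π : Equiv.Perm (Fin N)) (i j : Fin N) : Prop :=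
  ∃ k : ℕ, (π ^ k) i = j

/-- The number of elements of the orbit of `i` under the permutation `π`. -/
noncomputable def orbitSize {N : ℕ} (π : Equiv.Perm (Fin N)) (i : Fin N) : ℕ :=
  Set.ncard {j | SameOrbit π i j}

/-- `x` is a multiplicative basis for `𝒞_N` whose transition coefficients for the
`K`-linear automorphism `σ` (with underlying object permutation `σp`) are the scalars
`a i j` (i.e. `σ (x_{ij}) = a_{ij} • x_{σ(i) σ(j)}`), and these coefficients equal `1`
whenever `i` and `j` lie in the same `σp`-orbit: a *good basis* for `(𝒞_N, σ)`. -/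
def IsGoodBasis {K : Type} [Field K] {N : ℕ} (σ : Cn K N ⥤ Cn K N)
    (σp : Equiv.Perm (Fin N)) (x a : Cn K N → Cn K N → K) : Prop :=
  (∀ i j, x i j ≠ 0) ∧ (∀ i j k, x i j * x j k = x i k) ∧ (∀ i j, a i j ≠ 0) ∧
  (∀ i j : Cn K N, σ.map (CnHom j i (x i j)) =
    CnHom (σ.obj j) (σ.obj i) (a i j * x (σp i) (σp j))) ∧
  (∀ i j : Fin N, SameOrbit σp i j → a i j = 1)

section KeyAlg

open MulAction


/-- The subgroup of permutations of `α` leaving a function `ψ` invariant. -/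
def invSubgroup {α β : Type*} (ψ : α → β) : Subgroup (Equiv.Perm α) where
  carrier := {g | ∀ y, ψ (g y) = ψ y}
  one_mem' := fun _ => rfl
  mul_mem' := by
    intro g h hg hh y
    have : (g * h) y = g (h y) := rfl
    rw [this, hg (h y), hh y]
  inv_mem' := by
    intro g hg y
    have := hg (g⁻¹ y)
    rw [Equiv.Perm.inv_def, Equiv.apply_symm_apply] at this
    exact this.symm

theorem keyAlg {K : Type} [Field K] {n : ℕ} (σp τp : Equiv.Perm (Fin n))
    (hpt : ∀ i, τp (σp i) = σp (τp i))
    (htrans : ∀ i j : Fin n,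
      ∃ g ∈ Subgroup.closure ({σp, τp} : Set (Equiv.Perm (Fin n))), g i = j)
    (f g : Fin n → K) (c : K)
    (hf0 : ∀ i, f i ≠ 0) (hg0 : ∀ i, g i ≠ 0)
    (hfσ : ∀ i, f (σp i) = f i)
    (hc : ∀ i, f (τp i) * g (σp i) = c * (f i * g i)) :
    ∀ i j : Fin n, (f j / f i) ^ n = 1 := by
  classical
  intro i j
  -- Step 1 : cⁿ = 1
  have hcn : c ^ n = 1 := by
    have h1 : ∏ p : Fin n, (f (τp p) * g (σp p)) = ∏ p : Fin n, (c * (f p * g p)) :=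
      Finset.prod_congr rfl (fun p _ => hc p)
    rw [Finset.prod_mul_distrib, Equiv.prod_comp τp f, Equiv.prod_comp σp g,
      Finset.prod_mul_distrib, Finset.prod_const, Finset.card_univ, Fintype.card_fin,
      Finset.prod_mul_distrib] at h1
    have hP : (∏ p : Fin n, f p) * ∏ p : Fin n, g p ≠ 0 :=
      mul_ne_zero (Finset.prod_ne_zero_iff.2 fun p _ => hf0 p)
        (Finset.prod_ne_zero_iff.2 fun p _ => hg0 p)
    exact (mul_eq_right₀ hP).1 h1.symm
  -- the function φ p = f (τp p) / f p
  set φ : Fin n → K := fun p => f (τp p) / f p with hφdef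
  have hφσ : ∀ p, φ (σp p) = φ p := by
    intro p
    show f (τp (σp p)) / f (σp p) = f (τp p) / f p
    rw [hpt p, hfσ (τp p), hfσ p]
  have hφ : ∀ p, φ p = c * g p / g (σp p) := by
    intro p
    show f (τp p) / f p = c * g p / g (σp p)
    rw [div_eq_div_iff (hf0 p) (hg0 (σp p))]
    linear_combination hc p
  -- the acting cyclic group
  set G := Subgroup.zpowers σp with hGdef
  set m1 : G := ⟨σp, Subgroup.mem_zpowers σp⟩ with hm1
  have hφinv : ∀ u : G, ∀ p, φ ((u : Equiv.Perm (Fin n)) p) = φ p := by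
    have hle : G ≤ invSubgroup φ := (Subgroup.zpowers_le).2 hφσ
    exact fun u p => hle u.2 p
  -- orbit products : φ p ^ |orbit p| = c ^ |orbit p|
  have hφm : ∀ p : Fin n, φ p ^ (Nat.card (orbit G p)) = c ^ (Nat.card (orbit G p)) := by
    intro p
    haveI : Fintype (orbit G p) := Fintype.ofFinite _
    rw [Nat.card_eq_fintype_card]
    set m := Fintype.card (orbit G p) with hm
    let e : Equiv.Perm (orbit G p) := MulAction.toPerm m1
    have hcoe : ∀ y : orbit G p, ((e y : orbit G p) : Fin n) = σp y.1 := fun y => rfl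
    have h2 : ∀ y : orbit G p, φ y.1 = φ p := by
      rintro ⟨y, u, rfl⟩
      exact hφinv u p
    have h3 : ∏ y : orbit G p, φ y.1 = φ p ^ m := by
      rw [Finset.prod_congr rfl (fun y _ => h2 y), Finset.prod_const, Finset.card_univ]
    have h4 : ∏ y : orbit G p, φ y.1 = c ^ m := by
      have h5 : ∏ y : orbit G p, φ y.1 = ∏ y : orbit G p, (c * g y.1 / g (σp y.1)) :=
        Finset.prod_congr rfl (fun y _ => hφ y.1)
      have h6 : ∏ y : orbit G p, g (σp y.1) = ∏ y : orbit G p, g y.1 := by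
        have h7 := Equiv.prod_comp e (fun y : orbit G p => g y.1)
        rw [Finset.prod_congr rfl (fun y _ => by rw [hcoe y])] at h7
        exact h7
      rw [h5, Finset.prod_div_distrib, Finset.prod_mul_distrib, Finset.prod_const,
        Finset.card_univ, h6]
      rw [mul_div_assoc, div_self (Finset.prod_ne_zero_iff.2 fun y _ => hg0 y.1), mul_one]
    rw [← h3, h4]
  -- elements of the closure commute with every element of G
  have hcomm' : ∀ u ∈ Subgroup.closure ({σp, τp} : Set (Equiv.Perm (Fin n))),
      ∀ v : G, u * (v : Equiv.Perm (Fin n)) = (v : Equiv.Perm (Fin n)) * u := by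
    have hστ : σp * τp = τp * σp := Equiv.ext fun q => (hpt q).symm
    intro u hu
    have hu' : u ∈ Subgroup.centralizer {σp} := by
      refine (Subgroup.closure_le _).2 ?_ hu
      rintro w hw
      simp only [Set.mem_insert_iff, Set.mem_singleton_iff] at hw
      rcases hw with rfl | rfl
      · exact Subgroup.mem_centralizer_iff.2 (by rintro h rfl; rfl)
      · exact Subgroup.mem_centralizer_iff.2 (by rintro h rfl; exact hστ)
    have hσu : σp * u = u * σp := Subgroup.mem_centralizer_iff.1 hu' σp rfl
    have hle : Subgroup.zpowers σp ≤ Subgroup.centralizer {u} :=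
      (Subgroup.zpowers_le).2 (Subgroup.mem_centralizer_iff.2 (by rintro h rfl; exact hσu.symm))
    intro v
    exact (Subgroup.mem_centralizer_iff.1 (hle v.2) u rfl)
  -- orbit sizes are invariant under the closure
  have horb : ∀ u ∈ Subgroup.closure ({σp, τp} : Set (Equiv.Perm (Fin n))), ∀ q : Fin n,
      Nat.card (orbit G (u q)) = Nat.card (orbit G q) := by
    intro u hu q
    have hpt' : ∀ (v : G) (w : Fin n),
        u ((v : Equiv.Perm (Fin n)) w) = (v : Equiv.Perm (Fin n)) (u w) := by
      intro v w
      have := congrArg (fun (π : Equiv.Perm (Fin n)) => π w) (hcomm' u hu v)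
      simpa [Equiv.Perm.mul_apply] using this
    have hset : orbit G (u q) = u '' orbit G q := by
      ext w
      constructor
      · rintro ⟨v, rfl⟩
        refine ⟨(v : Equiv.Perm (Fin n)) q, ⟨v, rfl⟩, ?_⟩
        show u ((v : Equiv.Perm (Fin n)) q) = v • (u q)
        rw [hpt']; rfl
      · rintro ⟨w', ⟨v, rfl⟩, rfl⟩
        refine ⟨v, ?_⟩
        show v • (u q) = u (v • q)
        show (v : Equiv.Perm (Fin n)) (u q) = u ((v : Equiv.Perm (Fin n)) q)
        rw [hpt']
    rw [Nat.card_coe_set_eq, Nat.card_coe_set_eq, hset,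
      Set.ncard_image_of_injective _ u.injective]
  have hsame : ∀ q : Fin n, Nat.card (orbit G q) = Nat.card (orbit G i) := by
    intro q
    obtain ⟨u, hu, huq⟩ := htrans i q
    rw [← huq, horb u hu i]
  -- the common orbit size divides n
  have hdvd : Nat.card (orbit G i) ∣ n := by
    haveI : Fintype (orbitRel.Quotient G (Fin n)) := Fintype.ofFinite _
    haveI : ∀ ω : orbitRel.Quotient G (Fin n), Fintype (orbit G ω.out) :=
      fun _ => Fintype.ofFinite _
    have he := Nat.card_congr (MulAction.selfEquivSigmaOrbits G (Fin n))
    rw [Nat.card_eq_fintype_card, Fintype.card_fin, Nat.card_eq_fintype_card,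
      Fintype.card_sigma] at he
    have he3 : ∑ ω : orbitRel.Quotient G (Fin n), Fintype.card (orbit G ω.out)
        = Fintype.card (orbitRel.Quotient G (Fin n)) * Nat.card (orbit G i) := by
      rw [Finset.sum_congr rfl (fun ω _ => by
        rw [← Nat.card_eq_fintype_card, hsame ω.out]), Finset.sum_const, Finset.card_univ,
        smul_eq_mul]
    exact Dvd.intro_left _ (he.trans he3).symm
  -- φ ^ n = 1
  have hφn : ∀ p, φ p ^ n = 1 := by
    intro p
    obtain ⟨q, hq⟩ : Nat.card (orbit G p) ∣ n := (hsame p) ▸ hdvd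
    rw [hq, pow_mul, hφm p, ← pow_mul, ← hq, hcn]
  have hfτ : ∀ p, f (τp p) ^ n = f p ^ n := by
    intro p
    have h8 := hφn p
    rw [hφdef] at h8
    simp only [div_pow] at h8
    exact (div_eq_one_iff_eq (pow_ne_zero n (hf0 p))).1 h8
  -- f ^ n is invariant under the closure
  have hmemS : Subgroup.closure ({σp, τp} : Set (Equiv.Perm (Fin n)))
      ≤ invSubgroup (fun p => f p ^ n) := by
    refine (Subgroup.closure_le _).2 ?_
    rintro w hw
    simp only [Set.mem_insert_iff, Set.mem_singleton_iff] at hw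
    rcases hw with rfl | rfl
    · exact fun y => by show f _ ^ n = f y ^ n; rw [hfσ]
    · exact fun y => hfτ y
  obtain ⟨u, hu, huj⟩ := htrans i j
  have hfij : f j ^ n = f i ^ n := by
    rw [← huj]
    exact hmemS hu i
  rw [div_pow, hfij, div_self (pow_ne_zero n (hf0 i))]

end KeyAlg

section CnAux
variable {K : Type} [Field K] {n : ℕ}

lemma toK_comp {X Y Z : Cn K n} (f : X ⟶ Y) (g : Y ⟶ Z) : toK (f ≫ g) = toK f * toK g := rfl

lemma toK_eqToHom {X Y : Cn K n} (p : X = Y) : toK (eqToHom p) = 1 := by subst p; rfl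

lemma toK_map_smul (F : Cn K n ⥤ Cn K n) (hF : IsKLinearFunctor K F) (X Y : Cn K n) (r s : K) :
    toK (F.map (CnHom X Y (r * s))) = r * toK (F.map (CnHom X Y s)) := by
  have h1 : CnHom X Y (r * s) = r • CnHom X Y s := rfl
  rw [h1, hF.2 X Y r (CnHom X Y s)]
  rfl

lemma toK_map_congr (F : Cn K n ⥤ Cn K n) {X X' Y Y' : Cn K n} (hX : X = X') (hY : Y = Y')
    (r : K) : toK (F.map (CnHom X Y r)) = toK (F.map (CnHom X' Y' r)) := by
  subst hX; subst hY; rfl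

lemma toK_map_zero (F : Cn K n ⥤ Cn K n) (hF : IsKLinearFunctor K F) (X Y : Cn K n) :
    toK (F.map (0 : X ⟶ Y)) = 0 := by
  have h1 := hF.1 X Y 0 0
  rw [add_zero] at h1
  have h2 := congrArg toK h1
  have h3 : toK (F.map (0 : X ⟶ Y) + F.map (0 : X ⟶ Y))
      = toK (F.map (0 : X ⟶ Y)) + toK (F.map (0 : X ⟶ Y)) := rfl
  rw [h3] at h2
  exact (left_eq_add.1 h2)

lemma toK_map_ne_zero (F F' : Cn K n ⥤ Cn K n) (hF : IsKLinearFunctor K F)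
    (h1 : F ⋙ F' = 𝟭 (Cn K n)) (h2 : F' ⋙ F = 𝟭 (Cn K n)) (X Y : Cn K n) (r : K) (hr : r ≠ 0) :
    toK (F.map (CnHom X Y r)) ≠ 0 := by
  have hm := Functor.congr_hom h2 (CnHom (F.obj X) (F.obj Y) 1)
  have hm2 : toK (F.map (F'.map (CnHom (F.obj X) (F.obj Y) 1))) = 1 := by
    have h3 := congrArg toK hm
    rw [toK_comp, toK_comp, toK_eqToHom, toK_eqToHom, one_mul] at h3
    exact h3.trans (mul_one _)
  set s : K := toK (F'.map (CnHom (F.obj X) (F.obj Y) 1)) with hs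
  have hm3 : toK (F.map (CnHom (F'.obj (F.obj X)) (F'.obj (F.obj Y)) s)) = 1 := hm2
  have hX' : F'.obj (F.obj X) = X := Functor.congr_obj h1 X
  have hY' : F'.obj (F.obj Y) = Y := Functor.congr_obj h1 Y
  rw [toK_map_congr F hX' hY'] at hm3
  have hs0 : s ≠ 0 := by
    intro h
    rw [h] at hm3
    have h4 : CnHom X Y (0 : K) = (0 : X ⟶ Y) := rfl
    rw [h4, toK_map_zero F hF] at hm3
    exact zero_ne_one hm3
  have h5 : CnHom X Y r = CnHom X Y ((r * s⁻¹) * s) := by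
    congr 1
    field_simp
  rw [h5, toK_map_smul F hF, hm3, mul_one]
  exact mul_ne_zero hr (inv_ne_zero hs0)

end CnAux

def Bmat {K : Type} [Field K] {n : ℕ} (F : Cn K n ⥤ Cn K n) (x : Cn K n → Cn K n → K)
    (p q : Fin n) : K := toK (F.map (CnHom q p (x p q)))

/-- **Lemma (single `στ`-orbit: `σ`-coefficients are `n`-th roots of unity).**  Let `σ, τ`
be commuting `K`-linear automorphisms of `𝒞ₙ` whose object permutations generate a subgroup
acting transitively on `[n]`.  Then for any good basis for `(𝒞ₙ, σ)`, all transition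
coefficients `a i j` of `σ` satisfy `a i j ^ n = 1`. -/
theorem stmt16 (K : Type) [Field K] (n : ℕ)
    (σ τ : Cn K n ⥤ Cn K n)
    (hσl : IsKLinearFunctor K σ) (hτl : IsKLinearFunctor K τ)
    (hσa : ∃ σ' : Cn K n ⥤ Cn K n, σ ⋙ σ' = 𝟭 (Cn K n) ∧ σ' ⋙ σ = 𝟭 (Cn K n))
    (hτa : ∃ τ' : Cn K n ⥤ Cn K n, τ ⋙ τ' = 𝟭 (Cn K n) ∧ τ' ⋙ τ = 𝟭 (Cn K n))
    (hcomm : σ ⋙ τ = τ ⋙ σ)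
    (σp τp : Equiv.Perm (Fin n))
    (hobjσ : ∀ i : Cn K n, σ.obj i = σp i) (hobjτ : ∀ i : Cn K n, τ.obj i = τp i)
    (htrans : ∀ i j : Fin n,
      ∃ g ∈ Subgroup.closure ({σp, τp} : Set (Equiv.Perm (Fin n))), g i = j)
    (x a : Cn K n → Cn K n → K) (hx : IsGoodBasis σ σp x a) :
    ∀ i j : Fin n, a i j ^ n = 1 := by
  obtain ⟨hx0, hxm, ha0, hmap, hgood⟩ := hx
  obtain ⟨τ', hτ1, hτ2⟩ := hτa
  intro i j
  -- the object permutations commute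
  have hpt : ∀ p : Fin n, τp (σp p) = σp (τp p) := by
    intro p
    have h := Functor.congr_obj hcomm p
    change τ.obj (σ.obj p) = σ.obj (τ.obj p) at h
    rw [hobjσ p, hobjτ (σp p), hobjτ p, hobjσ (τp p)] at h
    exact h
  -- the scalar matrix of τ
  have hB0 : ∀ p q : Fin n, Bmat τ x p q ≠ 0 :=
    fun p q => toK_map_ne_zero τ τ' hτl hτ1 hτ2 q p (x p q) (hx0 p q)
  have hA : ∀ p q : Fin n, toK (σ.map (CnHom q p (x p q))) = a p q * x (σp p) (σp q) :=
    fun p q => congrArg toK (hmap p q)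
  -- composition of basis morphisms
  have hcompx : ∀ p q r : Fin n,
      (CnHom r q (x q r) ≫ CnHom q p (x p q)) = CnHom r p (x p r) := by
    intro p q r
    show x q r * x p q = x p r
    rw [mul_comm]
    exact hxm p q r
  -- cocycle identity for a
  have haco : ∀ p q r : Fin n, a p q * a q r = a p r := by
    intro p q r
    have h := congrArg toK (σ.map_comp (CnHom r q (x q r)) (CnHom q p (x p q)))
    rw [hcompx p q r, toK_comp, hA, hA, hA, ← hxm (σp p) (σp q) (σp r)] at h
    have h2 : (a p q * a q r) * (x (σp p) (σp q) * x (σp q) (σp r))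
        = a p r * (x (σp p) (σp q) * x (σp q) (σp r)) := by linear_combination h.symm
    exact mul_right_cancel₀ (mul_ne_zero (hx0 _ _) (hx0 _ _)) h2
  -- cocycle identity for `Bmat`
  have hBco : ∀ p q r : Fin n, Bmat τ x q r * Bmat τ x p q = Bmat τ x p r := by
    intro p q r
    have h := congrArg toK (τ.map_comp (CnHom r q (x q r)) (CnHom q p (x p q)))
    rw [hcompx p q r, toK_comp] at h
    exact h.symm
  -- the commuting relation between the two scalar systems
  have hrelB : ∀ p q : Fin n, a p q * Bmat τ x (σp p) (σp q)
      = (Bmat τ x p q / x (τp p) (τp q)) * (a (τp p) (τp q) * x (σp (τp p)) (σp (τp q))) := by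
    intro p q
    have hL : toK (τ.map (σ.map (CnHom q p (x p q)))) = a p q * Bmat τ x (σp p) (σp q) := by
      rw [hmap p q, toK_map_congr τ (hobjσ q) (hobjσ p)]
      exact toK_map_smul τ hτl _ _ _ _
    have hR : toK (σ.map (τ.map (CnHom q p (x p q))))
        = (Bmat τ x p q / x (τp p) (τp q)) * (a (τp p) (τp q) * x (σp (τp p)) (σp (τp q))) := by
      have e1 : τ.map (CnHom q p (x p q)) = CnHom (τ.obj q) (τ.obj p) (Bmat τ x p q) := rfl
      rw [e1, toK_map_congr σ (hobjτ q) (hobjτ p)]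
      have e2 : CnHom (τp q) (τp p) (Bmat τ x p q)
          = CnHom (τp q) (τp p) ((Bmat τ x p q / x (τp p) (τp q)) * x (τp p) (τp q)) := by
        congr 1
        exact (div_mul_cancel₀ _ (hx0 (τp p) (τp q))).symm
      rw [e2]
      exact (toK_map_smul σ hσl _ _ _ _).trans (congrArg _ (hA (τp p) (τp q)))
    have h0 := congrArg toK (Functor.congr_hom hcomm (CnHom q p (x p q)))
    rw [toK_comp, toK_comp, toK_eqToHom, toK_eqToHom, one_mul, mul_one] at h0
    exact hL.symm.trans (h0.trans hR)
  -- the normalized scalar system of τ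
  set b : Fin n → Fin n → K := fun p q => Bmat τ x p q / x (τp p) (τp q) with hbset
  have hb : ∀ p q : Fin n, b p q = Bmat τ x p q / x (τp p) (τp q) := fun _ _ => rfl
  have hb0 : ∀ p q : Fin n, b p q ≠ 0 := by
    intro p q
    rw [hb]
    exact div_ne_zero (hB0 p q) (hx0 _ _)
  have hbco : ∀ p q r : Fin n, b p q * b q r = b p r := by
    intro p q r
    have h := hBco p q r
    rw [hb, hb, hb, div_mul_div_comm]
    refine (div_eq_div_iff (mul_ne_zero (hx0 _ _) (hx0 _ _)) (hx0 _ _)).2 ?_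
    linear_combination x (τp p) (τp r) * h - Bmat τ x p r * hxm (τp p) (τp q) (τp r)
  have hrel : ∀ p q : Fin n, a p q * b (σp p) (σp q) = b p q * a (τp p) (τp q) := by
    intro p q
    rw [hb, hb, hpt p, hpt q, ← mul_div_assoc]
    refine (div_eq_iff (hx0 _ _)).2 ((hrelB p q).trans ?_)
    ring
  -- transition to the abstract lemma
  have haii : ∀ p : Fin n, a p p = 1 := fun p => (mul_eq_right₀ (ha0 p p)).1 (haco p p p)
  set f : Fin n → K := fun q => a i q with hf
  set g : Fin n → K := fun q => (b i q)⁻¹ with hg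
  have hf0 : ∀ q, f q ≠ 0 := fun q => ha0 i q
  have hg0 : ∀ q, g q ≠ 0 := fun q => inv_ne_zero (hb0 i q)
  have hfσ : ∀ q, f (σp q) = f q := by
    intro q
    show a i (σp q) = a i q
    have h1 : a q (σp q) = 1 := hgood q (σp q) ⟨1, by rw [pow_one]⟩
    rw [← haco i q (σp q), h1, mul_one]
  set c : K := a i (τp i) * (b i (σp i))⁻¹ with hcdef
  have hc : ∀ q, f (τp q) * g (σp q) = c * (f q * g q) := by
    intro q
    have F1 := hrel i q
    have F2 := hbco i (σp i) (σp q)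
    have F3 := haco i (τp i) (τp q)
    show a i (τp q) * (b i (σp q))⁻¹
        = (a i (τp i) * (b i (σp i))⁻¹) * (a i q * (b i q)⁻¹)
    field_simp [hb0 i (σp q), hb0 i (σp i), hb0 i q]
    linear_combination (-(b i q * b i (σp i))) * F3
      - (a i (τp i) * b i (σp i)) * F1 + (a i (τp i) * a i q) * F2
  have hkey := keyAlg σp τp hpt htrans f g c hf0 hg0 hfσ hc i j
  have hfi : f i = 1 := haii i
  rw [hfi, div_one] at hkey
  exact hkey
end

section
/- Let K be an algebraically closed field, σ a K-linear automorphism of 𝒞ₙ, and τ a K-linear autoequivalence of 𝒞ₙ with στ = τσ, such that [n] is not the disjoint union of two nonempty subsets each invariant under the object maps of both σ and τ. Then there exists a good basis (x_{ij}) for (𝒞ₙ,σ) such that the transition coefficients of both σ and τ are all n!-th roots of unity (a_{ij}^{n!} = b_{ij}^{n!} = 1 for all i,j). -/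
open CategoryTheory

open Function Finset

namespace Stmt18Aux

set_option linter.unusedSectionVars false

variable {K : Type} [Field K]

noncomputable def root [IsAlgClosed K] (m : ℕ) (z : K) : K :=
  if h : 0 < m then (IsAlgClosed.exists_pow_nat_eq z h).choose else 1

lemma root_pow [IsAlgClosed K] {m : ℕ} (hm : 0 < m) (z : K) : root m z ^ m = z := by
  rw [root, dif_pos hm]; exact (IsAlgClosed.exists_pow_nat_eq z hm).choose_spec

lemma root_ne_zero [IsAlgClosed K] {m : ℕ} (hm : 0 < m) {z : K} (hz : z ≠ 0) :
    root m z ≠ 0 := by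
  intro h
  apply hz
  rw [← root_pow hm z, h, zero_pow hm.ne']

section Iter

variable {α : Type*}

lemma invar_iterate {β : Type*} {f : α → α} {q : α → β} (hq : ∀ x, q (f x) = q x)
    (x : α) (t : ℕ) : q (f^[t] x) = q x := by
  induction t with
  | zero => rfl
  | succ t ih => rw [iterate_succ_apply', hq, ih]

lemma prod_shift {f : α → α} {w : α → K} (hw : ∀ x, w x ≠ 0) {x : α} {p : ℕ}
    (hx : f^[p] x = x) :
    ∏ t ∈ range p, w (f^[t] (f x)) = ∏ t ∈ range p, w (f^[t] x) := by
  have h1 : ∏ t ∈ range p, w (f^[t] (f x)) = ∏ t ∈ range p, w (f^[t+1] x) := by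
    refine prod_congr rfl fun t _ => ?_
    rw [← iterate_succ_apply]
  apply mul_right_cancel₀ (hw x)
  have h2 := Finset.prod_range_succ' (fun t => w (f^[t] x)) p
  have h3 := Finset.prod_range_succ (fun t => w (f^[t] x)) p
  simp only [iterate_zero_apply] at h2
  rw [h1, ← h2, h3, hx]

lemma prod_block {f : α → α} {w : α → K} {y : α} {d : ℕ} (hy : f^[d] y = y) (q : ℕ) :
    ∏ t ∈ range (d * q), w (f^[t] y) = (∏ t ∈ range d, w (f^[t] y)) ^ q := by
  induction q with
  | zero => simp
  | succ q ih =>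
    rw [Nat.mul_succ, Finset.prod_range_add, ih, pow_succ]
    congr 1
    refine prod_congr rfl fun t _ => ?_
    have hper : f^[d * q] y = y := (Function.IsPeriodicPt.mul_const hy q)
    rw [Nat.add_comm, iterate_add_apply, hper]

variable [Fintype α] [LinearOrder α]

/-- Finset orbit of a point under `f`. -/
noncomputable def orbF (f : α → α) (x : α) : Finset α :=
  (range (minimalPeriod f x)).image (fun t => f^[t] x)

lemma card_orbF (f : α → α) (x : α) : (orbF f x).card = minimalPeriod f x := by
  rw [orbF, Finset.card_image_of_injOn, Finset.card_range]
  rw [Finset.coe_range]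
  exact Function.iterate_injOn_Iio_minimalPeriod

lemma minimalPeriod_le_card (f : α → α) (x : α) :
    minimalPeriod f x ≤ Fintype.card α := by
  rw [← card_orbF f x]
  exact Finset.card_le_univ _

lemma mem_orbF_iff {f : α → α} {x y : α} :
    y ∈ orbF f x ↔ ∃ t, t < minimalPeriod f x ∧ f^[t] x = y := by
  simp [orbF, Finset.mem_image, Finset.mem_range]

lemma mem_orbF_self {f : α → α} {x : α} (hx : x ∈ periodicPts f) : x ∈ orbF f x :=
  mem_orbF_iff.2 ⟨0, minimalPeriod_pos_of_mem_periodicPts hx, rfl⟩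

lemma periodicPts_apply {f : α → α} {x : α} (hx : x ∈ periodicPts f) :
    f x ∈ periodicPts f := by
  obtain ⟨k, hk, hper⟩ := hx
  exact ⟨k, hk, hper.apply⟩

lemma periodicPts_iterate {f : α → α} {x : α} (hx : x ∈ periodicPts f) (t : ℕ) :
    f^[t] x ∈ periodicPts f := by
  obtain ⟨k, hk, hper⟩ := hx
  exact ⟨k, hk, hper.apply_iterate t⟩

lemma orbF_apply {f : α → α} {x : α} (hx : x ∈ periodicPts f) :
    orbF f (f x) = orbF f x := by
  have hp : 0 < minimalPeriod f x := minimalPeriod_pos_of_mem_periodicPts hx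
  have hmp : minimalPeriod f (f x) = minimalPeriod f x := minimalPeriod_apply hx
  apply Finset.Subset.antisymm
  · intro y hy
    obtain ⟨t, ht, rfl⟩ := mem_orbF_iff.1 hy
    rw [hmp] at ht
    have hstep : f^[t] (f x) = f^[t+1] x := (iterate_succ_apply f t x).symm
    rw [hstep]
    rcases Nat.lt_or_ge (t+1) (minimalPeriod f x) with h | h
    · exact mem_orbF_iff.2 ⟨t+1, h, rfl⟩
    · have h' : t + 1 = minimalPeriod f x := le_antisymm ht h
      rw [h', iterate_minimalPeriod]
      exact mem_orbF_self hx
  · intro y hy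
    obtain ⟨t, ht, rfl⟩ := mem_orbF_iff.1 hy
    rcases Nat.eq_zero_or_pos t with rfl | htpos
    · refine mem_orbF_iff.2 ⟨minimalPeriod f x - 1, ?_, ?_⟩
      · rw [hmp]; omega
      · have hstep : f^[minimalPeriod f x - 1] (f x) = f^[minimalPeriod f x - 1 + 1] x :=
          (iterate_succ_apply f _ x).symm
        have h' : minimalPeriod f x - 1 + 1 = minimalPeriod f x := by omega
        rw [hstep, h', iterate_minimalPeriod, iterate_zero_apply]
    · refine mem_orbF_iff.2 ⟨t - 1, by omega, ?_⟩
      have hstep : f^[t-1] (f x) = f^[t-1+1] x := (iterate_succ_apply f _ x).symm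
      rw [hstep]
      congr 1
      omega

/-- Representative (minimum) of the orbit of a periodic point. -/
noncomputable def repF (f : α → α) (x : α) : α :=
  if h : (orbF f x).Nonempty then (orbF f x).min' h else x

lemma repF_mem {f : α → α} {x : α} (hx : x ∈ periodicPts f) : repF f x ∈ orbF f x := by
  rw [repF, dif_pos ⟨x, mem_orbF_self hx⟩]
  exact Finset.min'_mem _ _

lemma repF_apply {f : α → α} {x : α} (hx : x ∈ periodicPts f) :
    repF f (f x) = repF f x := by
  have hne : (orbF f x).Nonempty := ⟨x, mem_orbF_self hx⟩
  rw [repF, repF, orbF_apply hx, dif_pos hne, dif_pos hne]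

lemma repF_iterate {f : α → α} (hall : ∀ x, x ∈ periodicPts f) (x : α) (t : ℕ) :
    repF f (f^[t] x) = repF f x :=
  invar_iterate (fun y => repF_apply (hall y)) x t

lemma exists_iterate_eq_repF {f : α → α} {x : α} (hx : x ∈ periodicPts f) :
    ∃ t, t < minimalPeriod f x ∧ f^[t] x = repF f x :=
  mem_orbF_iff.1 (repF_mem hx)

lemma repF_idem {f : α → α} (hall : ∀ x, x ∈ periodicPts f) (x : α) :
    repF f (repF f x) = repF f x := by
  obtain ⟨t, _, ht⟩ := exists_iterate_eq_repF (hall x)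
  conv_lhs => rw [← ht]
  rw [repF_iterate hall]

lemma reach_periodic (f : α → α) (x : α) :
    ∃ t, t ≤ Fintype.card α ∧ f^[t] x ∈ periodicPts f := by
  have hcard : Fintype.card α < Fintype.card (Fin (Fintype.card α + 1)) := by simp
  obtain ⟨a, b, hab, heq⟩ :=
    Fintype.exists_ne_map_eq_of_card_lt (fun k : Fin (Fintype.card α + 1) => f^[(k : ℕ)] x) hcard
  have main : ∀ p q : ℕ, p < q → q ≤ Fintype.card α → f^[p] x = f^[q] x →
      ∃ t, t ≤ Fintype.card α ∧ f^[t] x ∈ periodicPts f := by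
    intro p q hpq hqle he
    refine ⟨p, by omega, ?_⟩
    refine ⟨q - p, by omega, ?_⟩
    show f^[q - p] (f^[p] x) = f^[p] x
    rw [← iterate_add_apply]
    have hq : q - p + p = q := by omega
    rw [hq, ← he]
  have hb : (b : ℕ) ≤ Fintype.card α := by omega
  have ha : (a : ℕ) ≤ Fintype.card α := by omega
  rcases (Fin.val_ne_of_ne hab).lt_or_gt with h | h
  · exact main _ _ h hb heq
  · exact main _ _ h ha heq.symm

end Iter

section Cocycle

variable {α : Type*} [Fintype α] [LinearOrder α]

lemma cocycle (f : α → α) (W : α → K) (hW : ∀ x, W x ≠ 0)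
    (hcyc : ∀ x, x ∈ periodicPts f →
      ∏ t ∈ range (minimalPeriod f x), W (f^[t] x) = 1) :
    ∃ c : α → K, (∀ x, c x ≠ 0) ∧ ∀ x, c (f x) = W x * c x := by
  classical
  have hreach : ∀ x, ∃ t, f^[t] x ∈ periodicPts f := fun x => by
    obtain ⟨t, _, ht⟩ := reach_periodic f x; exact ⟨t, ht⟩
  set D : α → ℕ := fun x => Nat.find (hreach x) with hD
  have hDspec : ∀ x, f^[D x] x ∈ periodicPts f := fun x => Nat.find_spec (hreach x)
  have hDmin : ∀ x, ∀ t, t < D x → f^[t] x ∉ periodicPts f := fun x t ht =>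
    Nat.find_min (hreach x) ht
  have hDle : ∀ x t, f^[t] x ∈ periodicPts f → D x ≤ t := fun x t ht => Nat.find_le ht
  have hLex : ∀ x, x ∈ periodicPts f → ∃ t, f^[t] (repF f x) = x := by
    intro x hx
    obtain ⟨t, htlt, ht⟩ := exists_iterate_eq_repF hx
    refine ⟨minimalPeriod f x - t, ?_⟩
    rw [← ht, ← iterate_add_apply]
    have h' : minimalPeriod f x - t + t = minimalPeriod f x := by omega
    rw [h', iterate_minimalPeriod]
  set L : α → ℕ := fun x => if h : ∃ t, f^[t] (repF f x) = x then Nat.find h else 0 with hL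
  have hLval : ∀ (x : α) (hex : ∃ t, f^[t] (repF f x) = x), L x = Nat.find hex := by
    intro x hex; rw [hL]; simp only [dif_pos hex]
  have hLspec : ∀ (x : α), x ∈ periodicPts f → f^[L x] (repF f x) = x := by
    intro x hx
    rw [hLval x (hLex x hx)]; exact Nat.find_spec (hLex x hx)
  have hLmin : ∀ (x : α), x ∈ periodicPts f → ∀ t, t < L x → f^[t] (repF f x) ≠ x := by
    intro x hx t ht
    rw [hLval x (hLex x hx)] at ht
    exact Nat.find_min (hLex x hx) ht
  -- basic facts at periodic points
  have hRper : ∀ x, x ∈ periodicPts f → repF f x ∈ periodicPts f := by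
    intro x hx
    obtain ⟨s, _, hs⟩ := exists_iterate_eq_repF hx
    rw [← hs]; exact periodicPts_iterate hx s
  have hmR : ∀ x, x ∈ periodicPts f → minimalPeriod f (repF f x) = minimalPeriod f x := by
    intro x hx
    obtain ⟨s, _, hs⟩ := exists_iterate_eq_repF hx
    rw [← hs]; exact minimalPeriod_apply_iterate hx s
  have hRfix : ∀ x, x ∈ periodicPts f → f^[minimalPeriod f x] (repF f x) = repF f x := by
    intro x hx
    rw [← hmR x hx]; exact iterate_minimalPeriod
  have hLlt : ∀ x, x ∈ periodicPts f → L x < minimalPeriod f x := by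
    intro x hx
    have hp : 0 < minimalPeriod f x := minimalPeriod_pos_of_mem_periodicPts hx
    by_contra h
    push_neg at h
    have hmodlt : L x % minimalPeriod f x < minimalPeriod f x := Nat.mod_lt _ hp
    have hmod : f^[L x % minimalPeriod f x] (repF f x) = x := by
      have hmc : f^[minimalPeriod f x * (L x / minimalPeriod f x)] (repF f x) = repF f x :=
        Function.IsPeriodicPt.mul_const (hRfix x hx) _
      calc f^[L x % minimalPeriod f x] (repF f x)
          = f^[L x % minimalPeriod f x]
              (f^[minimalPeriod f x * (L x / minimalPeriod f x)] (repF f x)) := by rw [hmc]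
        _ = f^[L x % minimalPeriod f x + minimalPeriod f x * (L x / minimalPeriod f x)]
              (repF f x) := by rw [iterate_add_apply]
        _ = f^[L x] (repF f x) := by rw [Nat.mod_add_div]
        _ = x := hLspec x hx
    exact hLmin x hx _ (lt_of_lt_of_le hmodlt h) hmod
  set Cp : α → K := fun x => ∏ t ∈ range (L x), W (f^[t] (repF f x)) with hCp
  set c : α → K := fun x => Cp (f^[D x] x) / ∏ t ∈ range (D x), W (f^[t] x) with hc
  have hCp0 : ∀ x, Cp x ≠ 0 := fun x => Finset.prod_ne_zero_iff.2 fun t _ => hW _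
  have hprod0 : ∀ x, (∏ t ∈ range (D x), W (f^[t] x)) ≠ 0 := fun x =>
    Finset.prod_ne_zero_iff.2 fun t _ => hW _
  have hDzero : ∀ x, x ∈ periodicPts f → D x = 0 := by
    intro x hx
    have := hDle x 0 (by simpa using hx)
    omega
  -- on periodic points, Cp (f x) = W x * Cp x
  have hper : ∀ x, x ∈ periodicPts f → Cp (f x) = W x * Cp x := by
    intro x hx
    have hp : 0 < minimalPeriod f x := minimalPeriod_pos_of_mem_periodicPts hx
    have hfx : f x ∈ periodicPts f := periodicPts_apply hx
    have hR : repF f (f x) = repF f x := repF_apply hx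
    have hinj := @Function.iterate_injOn_Iio_minimalPeriod α f (repF f x)
    have hLxspec := hLspec x hx
    have hLxlt := hLlt x hx
    have hLfxspec : f^[L (f x)] (repF f x) = f x := by rw [← hR]; exact hLspec (f x) hfx
    have hLfxlt : L (f x) < minimalPeriod f x := by
      have := hLlt (f x) hfx
      rwa [minimalPeriod_apply hx] at this
    rcases Nat.lt_or_ge (L x + 1) (minimalPeriod f x) with hcase | hcase
    · -- L (f x) = L x + 1
      have hwit : f^[L x + 1] (repF f x) = f x := by
        rw [iterate_succ_apply', hLxspec]
      have hLfx : L (f x) = L x + 1 := by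
        apply hinj
        · simp only [Set.mem_Iio, hmR x hx]; exact hLfxlt
        · simp only [Set.mem_Iio, hmR x hx]; exact hcase
        · show f^[L (f x)] (repF f x) = f^[L x + 1] (repF f x)
          rw [hLfxspec, hwit]
      rw [hCp]
      simp only []
      rw [hLfx, hR, Finset.prod_range_succ, hLxspec]
      ring
    · -- L x + 1 = minimalPeriod f x, f x = repF f x
      have hLeq : L x + 1 = minimalPeriod f x := by omega
      have hfxR : f x = repF f x := by
        have h1 : f^[L x + 1] (repF f x) = f x := by rw [iterate_succ_apply', hLxspec]
        rw [← h1, hLeq, hRfix x hx]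
      have hLfxzero : L (f x) = 0 := by
        apply hinj
        · simp only [Set.mem_Iio, hmR x hx]; exact hLfxlt
        · simp only [Set.mem_Iio, hmR x hx]; exact hp
        · show f^[L (f x)] (repF f x) = f^[0] (repF f x)
          rw [hLfxspec, iterate_zero_apply, hfxR]
      have hcycR := hcyc (repF f x) (hRper x hx)
      rw [hmR x hx] at hcycR
      have hxprod : W x * Cp x = 1 := by
        rw [hCp]
        simp only []
        calc W x * ∏ t ∈ range (L x), W (f^[t] (repF f x))
            = (∏ t ∈ range (L x), W (f^[t] (repF f x))) * W (f^[L x] (repF f x)) := by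
              rw [hLxspec]; ring
          _ = ∏ t ∈ range (L x + 1), W (f^[t] (repF f x)) := (Finset.prod_range_succ _ _).symm
          _ = 1 := by rw [hLeq]; exact hcycR
      rw [hCp]
      simp only []
      rw [hLfxzero, hR]
      rw [Finset.range_zero, Finset.prod_empty]
      exact hxprod.symm
  refine ⟨c, fun x => div_ne_zero (hCp0 _) (hprod0 _), ?_⟩
  intro x
  rcases Nat.eq_zero_or_pos (D x) with hDx | hDx
  · -- x periodic
    have hx : x ∈ periodicPts f := by
      have := hDspec x; rwa [hDx, iterate_zero_apply] at this
    have hfx : f x ∈ periodicPts f := periodicPts_apply hx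
    have hDfx : D (f x) = 0 := hDzero _ hfx
    rw [hc]
    simp only [hDx, hDfx, iterate_zero_apply, Finset.range_zero, Finset.prod_empty, div_one]
    exact hper x hx
  · -- x not periodic
    have hDfx : D (f x) = D x - 1 := by
      have hle : D (f x) ≤ D x - 1 := by
        apply hDle
        have h1 : f^[D x - 1] (f x) = f^[D x] x := by
          rw [← iterate_succ_apply]
          congr 1
          omega
        rw [h1]; exact hDspec x
      have hge : D x - 1 ≤ D (f x) := by
        by_contra h
        push_neg at h
        have h2 : f^[D (f x)] (f x) = f^[D (f x) + 1] x := (iterate_succ_apply f _ x).symm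
        have h3 := hDspec (f x)
        rw [h2] at h3
        exact hDmin x (D (f x) + 1) (by omega) h3
      omega
    have hZfx : f^[D (f x)] (f x) = f^[D x] x := by
      rw [hDfx, ← iterate_succ_apply]
      congr 1
      omega
    rw [hc]
    simp only []
    rw [hZfx, hDfx]
    have hBne : (∏ t ∈ range (D x - 1), W (f^[t] (f x))) ≠ 0 :=
      Finset.prod_ne_zero_iff.2 fun t _ => hW _
    have hsplit : ∏ t ∈ range (D x), W (f^[t] x)
        = W x * ∏ t ∈ range (D x - 1), W (f^[t] (f x)) := by
      have h1 : ∀ t, W (f^[t] (f x)) = W (f^[t+1] x) := fun t => by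
        rw [← iterate_succ_apply]
      have h2 := Finset.prod_range_succ' (fun t => W (f^[t] x)) (D x - 1)
      have h3 : D x - 1 + 1 = D x := by omega
      rw [h3] at h2
      rw [h2, iterate_zero_apply]
      rw [mul_comm]
      congr 1
    rw [hsplit]
    have hcancel : W x * (Cp (f^[D x] x) / (W x * ∏ t ∈ range (D x - 1), W (f^[t] (f x))))
        = Cp (f^[D x] x) / ∏ t ∈ range (D x - 1), W (f^[t] (f x)) := by
      rw [← mul_div_assoc, mul_div_mul_left _ _ (hW x)]
    rw [hcancel]

end Cocycle


section Core

variable [IsAlgClosed K]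

lemma core {n : ℕ} (hn : 0 < n) (sp tp : Fin n → Fin n)
    (hsp : ∀ x, x ∈ periodicPts sp)
    (hst : ∀ i, sp (tp i) = tp (sp i))
    (u v : Fin n → K) (hu : ∀ i, u i ≠ 0) (hv : ∀ i, v i ≠ 0)
    (κ : K) (hκrel : ∀ i, u i * v (sp i) = κ * (v i * u (tp i)))
    (hconn : ∀ φ : Fin n → K, (∀ i, φ (sp i) = φ i) → (∀ i, φ (tp i) = φ i) →
      ∀ i j, φ i = φ j) :
    ∃ c lam g : Fin n → K, (∀ i, c i ≠ 0) ∧ (∀ i, lam i ≠ 0) ∧ (∀ i, g i ≠ 0) ∧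
      (∀ i, c i * u i = lam i * c (sp i)) ∧
      (∀ i, lam (sp i) = lam i) ∧
      (∀ i, c i * v i = g i * c (tp i)) ∧
      (∀ i j, lam i ^ n.factorial = lam j ^ n.factorial) ∧
      (∀ i j, g i ^ n.factorial = g j ^ n.factorial) := by
  classical
  set m : Fin n → ℕ := fun x => minimalPeriod sp x with hmdef
  have hm0 : ∀ x, 0 < m x := fun x => minimalPeriod_pos_of_mem_periodicPts (hsp x)
  have hmn : ∀ x, m x ≤ n := fun x => by
    have := minimalPeriod_le_card sp x; simpa using this
  have hmfac : ∀ x, m x ∣ n.factorial := fun x => Nat.dvd_factorial (hm0 x) (hmn x)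
  have hiter : ∀ x, sp^[m x] x = x := fun x => iterate_minimalPeriod
  have hmsp : ∀ x, m (sp x) = m x := fun x => minimalPeriod_apply (hsp x)
  have hcommit : ∀ t x, tp (sp^[t] x) = sp^[t] (tp x) := by
    intro t
    induction t with
    | zero => intro x; rfl
    | succ t ih =>
      intro x
      rw [iterate_succ_apply', ← hst, ih]
      exact (iterate_succ_apply' sp t (tp x)).symm
  have hmtp_dvd : ∀ x, m (tp x) ∣ m x := by
    intro x
    have h1 : sp^[m x] (tp x) = tp x := by rw [← hcommit, hiter]
    exact Function.IsPeriodicPt.minimalPeriod_dvd h1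
  set P : Fin n → K := fun x => ∏ t ∈ range (m x), u (sp^[t] x) with hPdef
  have hP0 : ∀ x, P x ≠ 0 := fun x => Finset.prod_ne_zero_iff.2 fun t _ => hu _
  have hPsp : ∀ x, P (sp x) = P x := by
    intro x
    show ∏ t ∈ range (m (sp x)), u (sp^[t] (sp x)) = ∏ t ∈ range (m x), u (sp^[t] x)
    rw [hmsp]
    exact prod_shift hu (hiter x)
  -- the key orbit-product relation
  have hstar : ∀ x, P x = κ ^ (m x) * P (tp x) ^ (m x / m (tp x)) := by
    intro x
    have hvne : (∏ t ∈ range (m x), v (sp^[t] x)) ≠ 0 :=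
      Finset.prod_ne_zero_iff.2 fun t _ => hv _
    have h1 : ∀ t : ℕ, u (sp^[t] x) * v (sp^[t] (sp x))
        = κ * (v (sp^[t] x) * u (sp^[t] (tp x))) := by
      intro t
      have h := hκrel (sp^[t] x)
      rw [hcommit t x] at h
      have hx2 : sp (sp^[t] x) = sp^[t] (sp x) :=
        (iterate_succ_apply' sp t x).symm.trans (iterate_succ_apply sp t x)
      rw [hx2] at h
      exact h
    have h2 : (∏ t ∈ range (m x), u (sp^[t] x)) * (∏ t ∈ range (m x), v (sp^[t] (sp x)))
        = κ ^ (m x) * ((∏ t ∈ range (m x), v (sp^[t] x))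
            * (∏ t ∈ range (m x), u (sp^[t] (tp x)))) := by
      calc (∏ t ∈ range (m x), u (sp^[t] x)) * (∏ t ∈ range (m x), v (sp^[t] (sp x)))
          = ∏ t ∈ range (m x), (u (sp^[t] x) * v (sp^[t] (sp x))) :=
            (Finset.prod_mul_distrib).symm
        _ = ∏ t ∈ range (m x), (κ * (v (sp^[t] x) * u (sp^[t] (tp x)))) :=
            Finset.prod_congr rfl (fun t _ => h1 t)
        _ = κ ^ (m x) * ((∏ t ∈ range (m x), v (sp^[t] x))
            * (∏ t ∈ range (m x), u (sp^[t] (tp x)))) := by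
            rw [Finset.prod_mul_distrib, Finset.prod_const, Finset.card_range,
              Finset.prod_mul_distrib]
    have h3 : ∏ t ∈ range (m x), v (sp^[t] (sp x)) = ∏ t ∈ range (m x), v (sp^[t] x) :=
      prod_shift hv (hiter x)
    have h4 : ∏ t ∈ range (m x), u (sp^[t] x)
        = (κ ^ (m x) * ∏ t ∈ range (m x), u (sp^[t] (tp x))) := by
      apply mul_right_cancel₀ hvne
      calc (∏ t ∈ range (m x), u (sp^[t] x)) * (∏ t ∈ range (m x), v (sp^[t] x))
          = (∏ t ∈ range (m x), u (sp^[t] x)) * (∏ t ∈ range (m x), v (sp^[t] (sp x))) := by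
            rw [h3]
        _ = κ ^ (m x) * ((∏ t ∈ range (m x), v (sp^[t] x))
            * (∏ t ∈ range (m x), u (sp^[t] (tp x)))) := h2
        _ = (κ ^ (m x) * ∏ t ∈ range (m x), u (sp^[t] (tp x)))
            * (∏ t ∈ range (m x), v (sp^[t] x)) := by ring
    have h5 : ∏ t ∈ range (m x), u (sp^[t] (tp x))
        = (∏ t ∈ range (m (tp x)), u (sp^[t] (tp x))) ^ (m x / m (tp x)) := by
      conv_lhs => rw [← Nat.mul_div_cancel' (hmtp_dvd x)]
      exact prod_block (hiter (tp x)) _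
    show ∏ t ∈ range (m x), u (sp^[t] x)
        = κ ^ (m x) * (∏ t ∈ range (m (tp x)), u (sp^[t] (tp x))) ^ (m x / m (tp x))
    rw [h4, h5]
  -- representatives
  set r : Fin n → Fin n := fun x => repF sp x with hrdef
  have hrsp : ∀ x, r (sp x) = r x := fun x => repF_apply (hsp x)
  have hrex : ∀ x, ∃ t, sp^[t] x = r x := by
    intro x
    obtain ⟨t, _, ht⟩ := exists_iterate_eq_repF (hsp x)
    exact ⟨t, ht⟩
  have hinvK : ∀ {β : Type} (φ : Fin n → β), (∀ y, φ (sp y) = φ y) → ∀ x, φ (r x) = φ x := by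
    intro β φ hφ x
    obtain ⟨t, ht⟩ := hrex x
    rw [← ht, invar_iterate hφ]
  have hmr : ∀ x, m (r x) = m x := hinvK m hmsp
  have hPr : ∀ x, P (r x) = P x := hinvK P hPsp
  have hridem : ∀ x, r (r x) = r x := hinvK r hrsp
  -- the lambda function
  set lam : Fin n → K := fun x => root (m (r x)) (P (r x)) with hlamdef
  have hlam_pow : ∀ x, lam x ^ (m x) = P x := by
    intro x
    show root (m (r x)) (P (r x)) ^ (m x) = P x
    rw [hmr, hPr]
    exact root_pow (hm0 x) _
  have hlam0 : ∀ x, lam x ≠ 0 := by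
    intro x
    show root (m (r x)) (P (r x)) ≠ 0
    exact root_ne_zero (by rw [hmr]; exact hm0 x) (by rw [hPr]; exact hP0 x)
  have hlamsp : ∀ x, lam (sp x) = lam x := by
    intro x
    show root (m (r (sp x))) (P (r (sp x))) = root (m (r x)) (P (r x))
    rw [hrsp]
  -- exponent arithmetic
  have hexp : ∀ a b : ℕ, a ∣ b → b ∣ n.factorial → 0 < a →
      (b / a) * (n.factorial / b) = n.factorial / a := by
    intro a b hab hbf ha
    obtain ⟨q, rfl⟩ := hab
    obtain ⟨w, hw⟩ := hbf
    have hq0 : 0 < q := by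
      by_contra hcon
      push_neg at hcon
      have hq : q = 0 := by omega
      subst hq
      rw [Nat.mul_zero, Nat.zero_mul] at hw
      exact Nat.factorial_ne_zero n hw
    rw [hw]
    rw [Nat.mul_div_cancel_left q ha, Nat.mul_div_cancel_left w (by positivity)]
    rw [Nat.mul_assoc, Nat.mul_div_cancel_left (q * w) ha]
  have hkey : ∀ x, lam x ^ n.factorial = κ ^ n.factorial * lam (tp x) ^ n.factorial := by
    intro x
    have h1 : lam x ^ n.factorial = P x ^ (n.factorial / m x) := by
      rw [← hlam_pow x, ← pow_mul, Nat.mul_div_cancel' (hmfac x)]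
    have h2 : lam (tp x) ^ n.factorial = P (tp x) ^ (n.factorial / m (tp x)) := by
      rw [← hlam_pow (tp x), ← pow_mul, Nat.mul_div_cancel' (hmfac (tp x))]
    rw [h1, h2, hstar x, mul_pow, ← pow_mul, ← pow_mul]
    congr 1
    · rw [Nat.mul_div_cancel' (hmfac x)]
    · congr 1
      exact hexp (m (tp x)) (m x) (hmtp_dvd x) (hmfac x) (hm0 _)
  -- the map induced on representatives by tp
  set rho : Fin n → Fin n := fun x => r (tp x) with hrhodef
  have hrhosp : ∀ x, rho (sp x) = rho x := by
    intro x
    show r (tp (sp x)) = r (tp x)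
    rw [← hst, hrsp]
  have hmrho : ∀ x, m (rho x) = m (tp x) := fun x => hmr (tp x)
  have hmrho_dvd : ∀ x, m (rho x) ∣ m x := by
    intro x
    rw [hmrho]; exact hmtp_dvd x
  have hPrel : ∀ x, P x = κ ^ (m x) * P (rho x) ^ (m x / m (rho x)) := by
    intro x
    have e1 : P (rho x) = P (tp x) := hPr (tp x)
    have e2 : m (rho x) = m (tp x) := hmr (tp x)
    rw [e1, e2]
    exact hstar x
  -- a periodic point of rho
  obtain ⟨t0, _, hyper0⟩ := reach_periodic rho (⟨0, hn⟩ : Fin n)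
  set y : Fin n := rho^[t0] (⟨0, hn⟩ : Fin n) with hydef
  have hyper : y ∈ periodicPts rho := hyper0
  set cc : ℕ := minimalPeriod rho y with hccdef
  have hcc0 : 0 < cc := minimalPeriod_pos_of_mem_periodicPts hyper
  have hycyc : rho^[cc] y = y := iterate_minimalPeriod
  -- iterates of rho at y are representatives
  have hrep : ∀ k, r (rho^[k] y) = rho^[k] y := by
    intro k
    rcases Nat.eq_zero_or_pos k with rfl | hk
    · show r (rho^[0] y) = rho^[0] y
      rw [iterate_zero_apply]
      have hy1 : y = rho (rho^[cc - 1] y) := by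
        have h' := iterate_succ_apply' rho (cc - 1) y
        simp only [Nat.succ_eq_add_one] at h'
        rw [show cc - 1 + 1 = cc from by omega] at h'
        rw [hycyc] at h'
        exact h'
      rw [hy1]
      exact hridem _
    · have hk1 : rho^[k] y = rho (rho^[k-1] y) := by
        have h' := iterate_succ_apply' rho (k - 1) y
        simp only [Nat.succ_eq_add_one] at h'
        rw [show k - 1 + 1 = k from by omega] at h'
        exact h'
      rw [hk1]
      exact hridem _
  -- m is constant along the rho-cycle
  have hchain : ∀ k l, k ≤ l → m (rho^[l] y) ∣ m (rho^[k] y) := by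
    intro k l hkl
    induction l with
    | zero =>
      have hk0 : k = 0 := by omega
      subst hk0
      exact dvd_refl _
    | succ l ih =>
      rcases Nat.lt_or_ge k (l+1) with hlt | hge
      · have hdvd1 : m (rho^[l+1] y) ∣ m (rho^[l] y) := by
          rw [iterate_succ_apply']
          exact hmrho_dvd _
        exact hdvd1.trans (ih (by omega))
      · have hkeq : k = l+1 := by omega
        subst hkeq
        exact dvd_refl _
  have hmconst : ∀ k, k ≤ cc → m (rho^[k] y) = m y := by
    intro k hk
    apply Nat.dvd_antisymm
    · simpa using hchain 0 k (by omega)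
    · have h := hchain k cc hk
      rwa [hycyc] at h
  have hcycrel : ∀ k, k < cc → P (rho^[k] y) = κ ^ (m y) * P (rho^[k+1] y) := by
    intro k hk
    have h1 := hPrel (rho^[k] y)
    rw [show rho (rho^[k] y) = rho^[k+1] y from (iterate_succ_apply' rho k y).symm] at h1
    rw [hmconst k (by omega), hmconst (k+1) (by omega)] at h1
    rw [Nat.div_self (hm0 y), pow_one] at h1
    exact h1
  have hPcyc : ∀ k, k ≤ cc → P y = κ ^ (m y * k) * P (rho^[k] y) := by
    intro k hk
    induction k with
    | zero => simp
    | succ k ih =>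
      calc P y = κ ^ (m y * k) * P (rho^[k] y) := ih (by omega)
        _ = κ ^ (m y * k) * (κ ^ (m y) * P (rho^[k+1] y)) := by rw [hcycrel k (by omega)]
        _ = κ ^ (m y * (k+1)) * P (rho^[k+1] y) := by rw [Nat.mul_succ, pow_add]; ring
  have hκcyc : κ ^ (m y * cc) = 1 := by
    have h1 := hPcyc cc le_rfl
    rw [hycyc] at h1
    have h2 : κ ^ (m y * cc) * P y = 1 * P y := by rw [one_mul, ← h1]
    exact mul_right_cancel₀ (hP0 y) h2
  -- cardinality: m y * cc ≤ n
  have hinjrho := @Function.iterate_injOn_Iio_minimalPeriod _ rho y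
  have hdisj : ∀ k ∈ range cc, ∀ l ∈ range cc, k ≠ l →
      Disjoint (orbF sp (rho^[k] y)) (orbF sp (rho^[l] y)) := by
    intro k hk l hl hne
    rw [Finset.disjoint_left]
    intro w hw1 hw2
    have h1 : r w = rho^[k] y := by
      obtain ⟨s, _, hs⟩ := mem_orbF_iff.1 hw1
      rw [← hs, invar_iterate hrsp, hrep]
    have h2 : r w = rho^[l] y := by
      obtain ⟨s, _, hs⟩ := mem_orbF_iff.1 hw2
      rw [← hs, invar_iterate hrsp, hrep]
    apply hne
    apply hinjrho
    · simp only [Set.mem_Iio]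
      exact Finset.mem_range.1 hk
    · simp only [Set.mem_Iio]
      exact Finset.mem_range.1 hl
    · show rho^[k] y = rho^[l] y
      rw [← h1, ← h2]
  have hcard : m y * cc ≤ n := by
    have hcbi := Finset.card_biUnion hdisj
    have hsum : ∑ k ∈ range cc, (orbF sp (rho^[k] y)).card = ∑ k ∈ range cc, m y := by
      refine Finset.sum_congr rfl fun k hk => ?_
      rw [card_orbF]
      exact hmconst k (le_of_lt (Finset.mem_range.1 hk))
    have hle := Finset.card_le_univ ((range cc).biUnion (fun k => orbF sp (rho^[k] y)))
    rw [hcbi, hsum, Finset.sum_const, Finset.card_range, smul_eq_mul] at hle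
    simp only [Finset.card_univ, Fintype.card_fin] at hle
    rw [Nat.mul_comm]
    simpa using hle
  have hκfac : κ ^ n.factorial = 1 := by
    have hdvd : m y * cc ∣ n.factorial :=
      Nat.dvd_factorial (Nat.mul_pos (hm0 y) hcc0) hcard
    obtain ⟨w, hw⟩ := hdvd
    rw [hw, pow_mul, hκcyc, one_pow]
  have hlamtp : ∀ x, lam (tp x) ^ n.factorial = lam x ^ n.factorial := by
    intro x
    rw [hkey x, hκfac, one_mul]
  -- first cocycle: make the sigma-transition coefficients orbit-constant
  obtain ⟨c₁, hc₁0, hc₁⟩ := cocycle sp (fun x => u x / lam x)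
    (fun x => div_ne_zero (hu x) (hlam0 x))
    (by
      intro x _
      show ∏ t ∈ range (m x), (u (sp^[t] x) / lam (sp^[t] x)) = 1
      rw [Finset.prod_div_distrib]
      have hl : ∏ t ∈ range (m x), lam (sp^[t] x) = lam x ^ (m x) := by
        rw [Finset.prod_congr rfl (fun t _ => invar_iterate hlamsp x t), Finset.prod_const,
          Finset.card_range]
      rw [hl, hlam_pow x]
      exact div_self (hP0 x))
  have hc₁rel : ∀ x, c₁ x * u x = lam x * c₁ (sp x) := by
    intro x
    rw [hc₁ x]
    field_simp [hlam0 x]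
  set g₁ : Fin n → K := fun x => c₁ x * v x / c₁ (tp x) with hg₁def
  have hg₁0 : ∀ x, g₁ x ≠ 0 := fun x =>
    div_ne_zero (mul_ne_zero (hc₁0 x) (hv x)) (hc₁0 (tp x))
  have hg₁sp : ∀ x, g₁ (sp x) = (κ * lam (tp x) / lam x) * g₁ x := by
    intro x
    show c₁ (sp x) * v (sp x) / c₁ (tp (sp x)) = κ * lam (tp x) / lam x * (c₁ x * v x / c₁ (tp x))
    have h1 := hκrel x
    have hvs : v (sp x) = κ * (v x * u (tp x)) / u x := by
      rw [eq_div_iff (hu x)]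
      linear_combination h1
    rw [← hst x, hc₁ (tp x), hc₁ x, hvs]
    field_simp [hu x, hu (tp x), hlam0 x, hlam0 (tp x), hc₁0 (tp x)]
  set H : Fin n → K := fun x => g₁ x ^ n.factorial with hHdef
  have hH0 : ∀ x, H x ≠ 0 := fun x => pow_ne_zero _ (hg₁0 x)
  have hHsp : ∀ x, H (sp x) = H x := by
    intro x
    have hfac : (κ * lam (tp x) / lam x) ^ n.factorial = 1 := by
      rw [div_pow, mul_pow, hκfac, one_mul, hlamtp x]
      exact div_self (pow_ne_zero _ (hlam0 x))
    show g₁ (sp x) ^ n.factorial = g₁ x ^ n.factorial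
    rw [hg₁sp x, mul_pow, hfac, one_mul]
  -- eventual image map and the constant function candidate
  set e : Fin n → Fin n := fun x => rho^[n.factorial] x with hedef
  have hfac0 : 0 < n.factorial := Nat.factorial_pos n
  have hefix : ∀ x, x ∈ periodicPts rho → e x = x := by
    intro x hx
    have hm1 : minimalPeriod rho x ≤ n := by simpa using minimalPeriod_le_card rho x
    have hmc : minimalPeriod rho x ∣ n.factorial :=
      Nat.dvd_factorial (minimalPeriod_pos_of_mem_periodicPts hx) hm1
    obtain ⟨w, hw⟩ := hmc
    show rho^[n.factorial] x = x
    rw [hw]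
    exact Function.IsPeriodicPt.mul_const (iterate_minimalPeriod) w
  have heper : ∀ x, e x ∈ periodicPts rho := by
    intro x
    obtain ⟨t, htle, ht⟩ := reach_periodic rho x
    have ht1 : t ≤ n := by simpa using htle
    have htn : t ≤ n.factorial := le_trans ht1 (Nat.self_le_factorial n)
    show rho^[n.factorial] x ∈ periodicPts rho
    have hsplit : rho^[n.factorial] x = rho^[n.factorial - t] (rho^[t] x) := by
      rw [← iterate_add_apply]
      congr 1
      omega
    rw [hsplit]
    exact periodicPts_iterate ht _
  have hesp : ∀ x, e (sp x) = e x := by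
    intro x
    show rho^[n.factorial] (sp x) = rho^[n.factorial] x
    obtain ⟨j, hj⟩ : ∃ j, n.factorial = j + 1 := ⟨n.factorial - 1, by omega⟩
    rw [hj, iterate_succ_apply, iterate_succ_apply, hrhosp]
  have hrhotp : ∀ x, rho (tp x) = rho (rho x) := by
    intro x
    show r (tp (tp x)) = r (tp (r (tp x)))
    obtain ⟨s, hs⟩ := hrex (tp x)
    calc r (tp (tp x)) = r (sp^[s] (tp (tp x))) := (invar_iterate hrsp _ s).symm
      _ = r (tp (sp^[s] (tp x))) := by rw [hcommit]
      _ = r (tp (r (tp x))) := by rw [hs]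
  have hetp : ∀ x, e (tp x) = e (rho x) := by
    intro x
    show rho^[n.factorial] (tp x) = rho^[n.factorial] (rho x)
    obtain ⟨j, hj⟩ : ∃ j, n.factorial = j + 1 := ⟨n.factorial - 1, by omega⟩
    rw [hj, iterate_succ_apply, iterate_succ_apply, hrhotp]
  have herho : ∀ x, e (rho x) = rho (e x) := by
    intro x
    show rho^[n.factorial] (rho x) = rho (rho^[n.factorial] x)
    rw [← iterate_succ_apply, iterate_succ_apply']
  set Q : Fin n → K := fun z => ∏ t ∈ range (minimalPeriod rho z), H (rho^[t] z) with hQdef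
  have hQ0 : ∀ z, Q z ≠ 0 := fun z => Finset.prod_ne_zero_iff.2 fun t _ => hH0 _
  have hQrho : ∀ z, z ∈ periodicPts rho → Q (rho z) = Q z := by
    intro z hz
    show ∏ t ∈ range (minimalPeriod rho (rho z)), H (rho^[t] (rho z))
        = ∏ t ∈ range (minimalPeriod rho z), H (rho^[t] z)
    rw [minimalPeriod_apply hz]
    exact prod_shift hH0 iterate_minimalPeriod
  set kk : Fin n → K := fun x => root (minimalPeriod rho (e x)) (Q (e x)) with hkkdef
  have hkk0 : ∀ x, kk x ≠ 0 := fun x =>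
    root_ne_zero (minimalPeriod_pos_of_mem_periodicPts (heper x)) (hQ0 _)
  have hkkrho : ∀ x, kk (rho x) = kk x := by
    intro x
    show root (minimalPeriod rho (e (rho x))) (Q (e (rho x)))
        = root (minimalPeriod rho (e x)) (Q (e x))
    rw [herho x, minimalPeriod_apply (heper x), hQrho _ (heper x)]
  have hkksp : ∀ x, kk (sp x) = kk x := by
    intro x
    show root (minimalPeriod rho (e (sp x))) (Q (e (sp x)))
        = root (minimalPeriod rho (e x)) (Q (e x))
    rw [hesp x]
  have hkktp : ∀ x, kk (tp x) = kk x := by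
    intro x
    have h1 : kk (tp x) = kk (rho x) := by
      show root (minimalPeriod rho (e (tp x))) (Q (e (tp x)))
          = root (minimalPeriod rho (e (rho x))) (Q (e (rho x)))
      rw [hetp x]
    rw [h1, hkkrho x]
  have hkkspec : ∀ z, z ∈ periodicPts rho → kk z ^ (minimalPeriod rho z) = Q z := by
    intro z hz
    show root (minimalPeriod rho (e z)) (Q (e z)) ^ (minimalPeriod rho z) = Q z
    rw [hefix z hz]
    exact root_pow (minimalPeriod_pos_of_mem_periodicPts hz) _
  -- second cocycle
  obtain ⟨ν₀, hν₀0, hν₀⟩ := cocycle rho (fun z => H z / kk z)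
    (fun z => div_ne_zero (hH0 z) (hkk0 z))
    (by
      intro z hz
      have hkkit : ∀ t, kk (rho^[t] z) = kk z := fun t => invar_iterate hkkrho z t
      rw [Finset.prod_div_distrib]
      have hkprod : ∏ t ∈ range (minimalPeriod rho z), kk (rho^[t] z)
          = kk z ^ (minimalPeriod rho z) := by
        rw [Finset.prod_congr rfl (fun t _ => hkkit t), Finset.prod_const, Finset.card_range]
      rw [hkprod, hkkspec z hz]
      exact div_self (hQ0 z))
  set ν : Fin n → K := fun x => ν₀ (r x) with hνdef
  have hν0 : ∀ x, ν x ≠ 0 := fun x => hν₀0 _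
  have hνsp : ∀ x, ν (sp x) = ν x := by
    intro x
    show ν₀ (r (sp x)) = ν₀ (r x)
    rw [hrsp]
  have hrhor : ∀ x, rho (r x) = rho x := hinvK rho hrhosp
  have hHr : ∀ x, H (r x) = H x := hinvK H hHsp
  have hkkr : ∀ x, kk (r x) = kk x := hinvK kk hkksp
  have hνrel : ∀ x, H x * ν x = kk x * ν (tp x) := by
    intro x
    have h1 := hν₀ (r x)
    rw [hrhor x, hHr x, hkkr x] at h1
    show H x * ν₀ (r x) = kk x * ν₀ (r (tp x))
    have h2 : ν₀ (r (tp x)) = ν₀ (rho x) := rfl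
    rw [h2, h1]
    rw [div_mul_eq_mul_div, mul_comm (kk x), div_mul_cancel₀ _ (hkk0 x)]
  set μ : Fin n → K := fun x => root n.factorial (ν x) with hμdef
  have hμ0 : ∀ x, μ x ≠ 0 := fun x => root_ne_zero hfac0 (hν0 x)
  have hμpow : ∀ x, μ x ^ n.factorial = ν x := fun x => root_pow hfac0 _
  have hμsp : ∀ x, μ (sp x) = μ x := by
    intro x
    show root n.factorial (ν (sp x)) = root n.factorial (ν x)
    rw [hνsp]
  -- conclusion
  refine ⟨fun x => c₁ x * μ x, lam, fun x => g₁ x * μ x / μ (tp x),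
    fun x => mul_ne_zero (hc₁0 x) (hμ0 x), hlam0,
    fun x => div_ne_zero (mul_ne_zero (hg₁0 x) (hμ0 x)) (hμ0 (tp x)), ?_, hlamsp, ?_, ?_, ?_⟩
  · intro x
    show c₁ x * μ x * u x = lam x * (c₁ (sp x) * μ (sp x))
    rw [hμsp x]
    linear_combination (μ x) * hc₁rel x
  · intro x
    have h6 : g₁ x * c₁ (tp x) = c₁ x * v x := by
      show c₁ x * v x / c₁ (tp x) * c₁ (tp x) = c₁ x * v x
      exact div_mul_cancel₀ _ (hc₁0 (tp x))
    show c₁ x * μ x * v x = g₁ x * μ x / μ (tp x) * (c₁ (tp x) * μ (tp x))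
    calc c₁ x * μ x * v x = (c₁ x * v x) * μ x := by ring
      _ = (g₁ x * c₁ (tp x)) * μ x := by rw [h6]
      _ = g₁ x * μ x / μ (tp x) * (c₁ (tp x) * μ (tp x)) := by
          field_simp [hμ0 (tp x)]
  · refine hconn (fun x => lam x ^ n.factorial) (fun i => ?_) (fun i => ?_)
    · show lam (sp i) ^ n.factorial = lam i ^ n.factorial
      rw [hlamsp]
    · exact hlamtp i
  · have hgk : ∀ x, (g₁ x * μ x / μ (tp x)) ^ n.factorial = kk x := by
      intro x
      rw [div_pow, mul_pow, hμpow x, hμpow (tp x)]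
      have h7 : g₁ x ^ n.factorial = H x := rfl
      rw [h7]
      rw [hνrel x]
      exact mul_div_cancel_right₀ _ (hν0 (tp x))
    intro i j
    rw [hgk i, hgk j]
    exact hconn kk hkksp hkktp i j

end Core

end Stmt18Aux

/-- **Theorem (indecomposable case: coefficients are `n!`-th roots of unity).**  Let `K` be
algebraically closed, `σ` a `K`-linear automorphism of `𝒞ₙ` and `τ` a commuting `K`-linear
autoequivalence such that `[n]` is not the disjoint union of two nonempty subsets invariant
under the object maps of both `σ` and `τ`.  Then there is a good basis for `(𝒞ₙ, σ)` such
that the transition coefficients of both `σ` and `τ` are `n!`-th roots of unity. -/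
theorem stmt18 (K : Type) [Field K] [IsAlgClosed K] (n : ℕ)
    (σ τ : Cn K n ⥤ Cn K n)
    (hσl : IsKLinearFunctor K σ) (hτl : IsKLinearFunctor K τ)
    (hσa : ∃ σ' : Cn K n ⥤ Cn K n, σ ⋙ σ' = 𝟭 (Cn K n) ∧ σ' ⋙ σ = 𝟭 (Cn K n))
    (hτe : τ.IsEquivalence)
    (hcomm : σ ⋙ τ = τ ⋙ σ)
    (σp : Equiv.Perm (Fin n)) (hobj : ∀ i : Cn K n, σ.obj i = σp i)
    (hind : ¬ ∃ S : Set (Fin n), S.Nonempty ∧ S ≠ Set.univ ∧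
      (∀ i : Cn K n, (i : Fin n) ∈ S → (σ.obj i : Fin n) ∈ S) ∧
      (∀ i : Cn K n, (i : Fin n) ∈ S → (τ.obj i : Fin n) ∈ S) ∧
      (∀ i : Cn K n, (i : Fin n) ∉ S → (σ.obj i : Fin n) ∉ S) ∧
      (∀ i : Cn K n, (i : Fin n) ∉ S → (τ.obj i : Fin n) ∉ S)) :
    ∃ x a b : Cn K n → Cn K n → K,
      IsGoodBasis σ σp x a ∧
      (∀ i j, b i j ≠ 0) ∧
      (∀ i j : Cn K n, τ.map (CnHom j i (x i j)) =
        CnHom (τ.obj j) (τ.obj i) (b i j * x (τ.obj i) (τ.obj j))) ∧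
      (∀ i j : Fin n, a i j ^ (Nat.factorial n) = 1) ∧ (∀ i j : Fin n, b i j ^ (Nat.factorial n) = 1) := by
  classical
  rcases Nat.eq_zero_or_pos n with hn0 | hn
  · subst hn0
    exact ⟨fun _ _ => 1, fun _ _ => 1, fun _ _ => 1,
      ⟨fun i _ => Fin.elim0 i, fun i _ _ => Fin.elim0 i, fun i _ => Fin.elim0 i,
        fun i _ => Fin.elim0 i, fun i _ => Fin.elim0 i⟩,
      fun i _ => Fin.elim0 i, fun i _ => Fin.elim0 i, fun i _ => Fin.elim0 i,
      fun i _ => Fin.elim0 i⟩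
  · set sp : Fin n → Fin n := fun i => σ.obj i with hspdef
    set tp : Fin n → Fin n := fun i => τ.obj i with htpdef
    -- scalar cocycles
    set s : Fin n → Fin n → K := fun i j => toK (σ.map (CnHom (j : Cn K n) i (1:K))) with hsdef
    set t : Fin n → Fin n → K := fun i j => toK (τ.map (CnHom (j : Cn K n) i (1:K))) with htdef
    have hFmul : ∀ (F : Cn K n ⥤ Cn K n), ∀ i j k : Cn K n,
        toK (F.map (CnHom j i (1:K))) * toK (F.map (CnHom k j (1:K)))
          = toK (F.map (CnHom k i (1:K))) := by
      intro F i j k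
      have hcompm : CnHom k j (1:K) ≫ CnHom j i (1:K) = CnHom k i (1:K) := by
        show (1 : K) * 1 = 1
        exact one_mul 1
      have h1 : F.map (CnHom k j (1:K) ≫ CnHom j i (1:K))
          = F.map (CnHom k j (1:K)) ≫ F.map (CnHom j i (1:K)) := F.map_comp _ _
      rw [hcompm] at h1
      show toK (F.map (CnHom j i (1:K))) * toK (F.map (CnHom k j (1:K))) = _
      rw [h1]
      show toK (F.map (CnHom j i 1)) * toK (F.map (CnHom k j 1))
        = toK (F.map (CnHom k j 1)) * toK (F.map (CnHom j i 1))
      ring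
    have hFid : ∀ (F : Cn K n ⥤ Cn K n), ∀ i : Cn K n, toK (F.map (CnHom i i (1:K))) = 1 := by
      intro F i
      have h1 : CnHom i i (1:K) = 𝟙 i := rfl
      rw [h1, F.map_id]
      rfl
    have hmapCn : ∀ (F : Cn K n ⥤ Cn K n), IsKLinearFunctor K F → ∀ (i j : Cn K n) (rr : K),
        F.map (CnHom j i rr) = CnHom (F.obj j) (F.obj i) (rr * toK (F.map (CnHom j i (1:K)))) := by
      intro F hF i j rr
      have h1 : CnHom j i rr = rr • CnHom j i (1:K) := by
        show rr = rr • (1 : K)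
        rw [smul_eq_mul, mul_one]
      rw [h1, hF.2 j i rr (CnHom j i (1:K))]
      show rr • toK (F.map (CnHom j i (1:K))) = rr * toK (F.map (CnHom j i (1:K)))
      rw [smul_eq_mul]
    have hs0 : ∀ i j, s i j ≠ 0 := by
      intro i j
      apply left_ne_zero_of_mul_eq_one (b := s j i)
      exact (hFmul σ i j i).trans (hFid σ i)
    have ht0 : ∀ i j, t i j ≠ 0 := by
      intro i j
      apply left_ne_zero_of_mul_eq_one (b := t j i)
      exact (hFmul τ i j i).trans (hFid τ i)
    -- commutation relation on scalars
    have hobj2 : ∀ i : Fin n, sp (tp i) = tp (sp i) := by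
      intro i
      have := congrArg (fun (F : Cn K n ⥤ Cn K n) => F.obj i) hcomm
      exact (this).symm
    have hR : ∀ i j : Fin n, s i j * t (sp i) (sp j) = t i j * s (tp i) (tp j) := by
      intro i j
      have h0 := congrArg (fun (F : Cn K n ⥤ Cn K n) =>
        toK (F.map (CnHom (j : Cn K n) i (1:K)))) hcomm
      have hL : toK ((σ ⋙ τ).map (CnHom (j : Cn K n) i (1:K))) = s i j * t (sp i) (sp j) := by
        show toK (τ.map (σ.map (CnHom (j : Cn K n) i (1:K)))) = _
        erw [hmapCn σ hσl, hmapCn τ hτl]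
        show (1 * s i j) * t (sp i) (sp j) = s i j * t (sp i) (sp j)
        rw [one_mul]
      have hRs : toK ((τ ⋙ σ).map (CnHom (j : Cn K n) i (1:K))) = t i j * s (tp i) (tp j) := by
        show toK (σ.map (τ.map (CnHom (j : Cn K n) i (1:K)))) = _
        erw [hmapCn τ hτl, hmapCn σ hσl]
        show (1 * t i j) * s (tp i) (tp j) = t i j * s (tp i) (tp j)
        rw [one_mul]
      rw [← hL, ← hRs]
      exact h0
    -- one-index data
    set i0 : Fin n := ⟨0, hn⟩ with hi0
    set u : Fin n → K := fun i => s i i0 with hudef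
    set v : Fin n → K := fun i => t i i0 with hvdef
    have hu : ∀ i, u i ≠ 0 := fun i => hs0 i i0
    have hv : ∀ i, v i ≠ 0 := fun i => ht0 i i0
    have hsval : ∀ i j, s i j = u i / u j := by
      intro i j
      rw [eq_div_iff (hu j)]
      exact hFmul σ i j i0
    have htval : ∀ i j, t i j = v i / v j := by
      intro i j
      rw [eq_div_iff (hv j)]
      exact hFmul τ i j i0
    set κ : K := v (sp i0) / u (tp i0) with hκdef
    have hu0 : u i0 = 1 := hFid σ i0
    have hv0 : v i0 = 1 := hFid τ i0
    have hκrel : ∀ i, u i * v (sp i) = κ * (v i * u (tp i)) := by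
      intro i
      have h1 := hR i i0
      rw [hsval, hsval, htval, htval] at h1
      rw [div_mul_div_comm, div_mul_div_comm,
        div_eq_div_iff (mul_ne_zero (hu i0) (hv (sp i0))) (mul_ne_zero (hv i0) (hu (tp i0)))] at h1
      rw [hu0, hv0, one_mul, one_mul] at h1
      show u i * v (sp i) = v (sp i0) / u (tp i0) * (v i * u (tp i))
      rw [div_mul_eq_mul_div, eq_div_iff (hu (tp i0))]
      linear_combination h1
    -- periodicity of sp
    have hspeq : sp = ⇑σp := funext hobj
    have hsp : ∀ x : Fin n, x ∈ periodicPts sp := by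
      intro x
      refine ⟨orderOf σp, orderOf_pos σp, ?_⟩
      show sp^[orderOf σp] x = x
      rw [hspeq, Equiv.Perm.iterate_eq_pow, pow_orderOf_eq_one]
      rfl
    -- connectivity
    have hconn : ∀ φ : Fin n → K, (∀ i, φ (sp i) = φ i) → (∀ i, φ (tp i) = φ i) →
        ∀ i j, φ i = φ j := by
      intro φ h1 h2 i j
      by_contra hne
      apply hind
      refine ⟨{w : Fin n | φ w = φ i}, ⟨i, rfl⟩, ?_, ?_, ?_, ?_, ?_⟩
      · intro heq
        have hj : (j : Fin n) ∈ {w : Fin n | φ w = φ i} := by rw [heq]; trivial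
        exact hne hj.symm
      · intro w hw
        show φ (sp w) = φ i
        rw [h1 w]
        exact hw
      · intro w hw
        show φ (tp w) = φ i
        rw [h2 w]
        exact hw
      · intro w hw hcon
        apply hw
        show φ w = φ i
        rw [← h1 w]
        exact hcon
      · intro w hw hcon
        apply hw
        show φ w = φ i
        rw [← h2 w]
        exact hcon
    obtain ⟨c, lam, g, hc0, hlam0, hg0, hrel1, hrel2, hrel3, hrel4, hrel5⟩ :=
      Stmt18Aux.core hn sp tp hsp (fun i => hobj2 i) u v hu hv κ hκrel hconn
    have hlamit : ∀ x k, lam (sp^[k] x) = lam x := fun x k => Stmt18Aux.invar_iterate hrel2 x k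
    refine ⟨fun i j => c i / c j, fun i j => lam i / lam j, fun i j => g i / g j,
      ⟨?_, ?_, ?_, ?_, ?_⟩, ?_, ?_, ?_, ?_⟩
    · intro i j
      exact div_ne_zero (hc0 i) (hc0 j)
    · intro i j k
      rw [div_mul_div_comm, mul_comm (c i) (c j), mul_div_mul_left _ _ (hc0 j)]
    · intro i j
      exact div_ne_zero (hlam0 i) (hlam0 j)
    · intro i j
      rw [hmapCn σ hσl]
      apply congrArg (CnHom (σ.obj j) (σ.obj i))
      have hsij : toK (σ.map (CnHom (j : Cn K n) i (1:K))) = u i / u j := hsval i j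
      rw [hsij]
      have hoi : (σp i : Fin n) = sp i := (hobj i).symm
      have hoj : (σp j : Fin n) = sp j := (hobj j).symm
      rw [hoi, hoj]
      have h1 := hrel1 i
      have h2 := hrel1 j
      rw [div_mul_div_comm, div_mul_div_comm,
        div_eq_div_iff (mul_ne_zero (hc0 j) (hu j)) (mul_ne_zero (hlam0 j) (hc0 (sp j)))]
      linear_combination (lam j * c (sp j)) * h1 - (lam i * c (sp i)) * h2
    · intro i j hij
      obtain ⟨k, hk⟩ := hij
      have h2 : sp^[k] i = (σp ^ k) i := by
        rw [hspeq]
        rfl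
      have hlj : lam j = lam i := by
        rw [← hk, ← h2, hlamit i k]
      show lam i / lam j = 1
      rw [hlj]
      exact div_self (hlam0 i)
    · intro i j
      exact div_ne_zero (hg0 i) (hg0 j)
    · intro i j
      rw [hmapCn τ hτl]
      apply congrArg (CnHom (τ.obj j) (τ.obj i))
      have htij : toK (τ.map (CnHom (j : Cn K n) i (1:K))) = v i / v j := htval i j
      rw [htij]
      have h1 := hrel3 i
      have h2 := hrel3 j
      rw [div_mul_div_comm, div_mul_div_comm,
        div_eq_div_iff (mul_ne_zero (hc0 j) (hv j)) (mul_ne_zero (hg0 j) (hc0 (tp j)))]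
      linear_combination (g j * c (tp j)) * h1 - (g i * c (tp i)) * h2
    · intro i j
      rw [div_pow, hrel4 i j]
      exact div_self (pow_ne_zero _ (hlam0 j))
    · intro i j
      rw [div_pow, hrel5 i j]
      exact div_self (pow_ne_zero _ (hg0 j))
end

section
/- Let K be an algebraically closed field of characteristic not equal to 2, and let σ, τ be commuting K-linear automorphisms of 𝒞ₙ. If there exists a skew-continuous natural isomorphism φ : σ → τ, i.e., a natural isomorphism with σ(φ_i) = −φ_{σ(i)} for every object i, then n is even. -/
open CategoryTheory

instance {K : Type} [Field K] {n : ℕ} : Fintype (Cn K n) := inferInstanceAs (Fintype (Fin n))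

/-- **Corollary (skew-continuity forces `n` even).**  Let `K` be an algebraically closed
field of characteristic not `2` and `σ, τ` commuting `K`-linear automorphisms of `𝒞ₙ`.
If there is a skew-continuous natural isomorphism `φ : σ ≅ τ`, i.e. one with
`σ(φ_i) = -φ_{σ(i)}` for every object `i`, then `n` is even. -/
theorem stmt19 (K : Type) [Field K] [IsAlgClosed K] (h2 : (2 : K) ≠ 0) (n : ℕ)
    (σ τ : Cn K n ⥤ Cn K n)
    (hσl : IsKLinearFunctor K σ) (hτl : IsKLinearFunctor K τ)
    (hσa : ∃ σ' : Cn K n ⥤ Cn K n, σ ⋙ σ' = 𝟭 (Cn K n) ∧ σ' ⋙ σ = 𝟭 (Cn K n))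
    (hτa : ∃ τ' : Cn K n ⥤ Cn K n, τ ⋙ τ' = 𝟭 (Cn K n) ∧ τ' ⋙ τ = 𝟭 (Cn K n))
    (hcomm : σ ⋙ τ = τ ⋙ σ)
    (φ : σ ≅ τ)
    (hskew : ∀ i : Cn K n, toK (σ.map (φ.hom.app i)) = - toK (φ.hom.app (σ.obj i))) :
    Even n := by
  rcases Nat.eq_zero_or_pos n with hn | hn
  · simp [hn]
  obtain ⟨σ', hσ1, hσ2⟩ := hσa
  obtain ⟨τ', hτ1, hτ2⟩ := hτa
  have hσbij : Function.Bijective (σ.obj : Cn K n → Cn K n) :=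
    Function.bijective_iff_has_inverse.mpr ⟨σ'.obj,
      fun x => Functor.congr_obj hσ1 x, fun x => Functor.congr_obj hσ2 x⟩
  have hτbij : Function.Bijective (τ.obj : Cn K n → Cn K n) :=
    Function.bijective_iff_has_inverse.mpr ⟨τ'.obj,
      fun x => Functor.congr_obj hτ1 x, fun x => Functor.congr_obj hτ2 x⟩
  set j₀ : Cn K n := (⟨0, hn⟩ : Fin n) with hj₀
  set c : Cn K n → Cn K n → K := fun X Y => toK (σ.map (CnHom X Y 1)) with hc
  set u : Cn K n → K := fun X => c X j₀ with hu
  have hcmul : ∀ X Y Z : Cn K n, c X Z = c X Y * c Y Z := by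
    intro X Y Z
    have h : (CnHom X Z 1 : X ⟶ Z) = CnHom X Y 1 ≫ CnHom Y Z 1 := (mul_one (1 : K)).symm
    show toK (σ.map (CnHom X Z 1)) = toK (σ.map (CnHom X Y 1)) * toK (σ.map (CnHom Y Z 1))
    rw [h, σ.map_comp]
    rfl
  have hcid : ∀ X : Cn K n, c X X = 1 := by
    intro X
    have h : (CnHom X X 1 : X ⟶ X) = 𝟙 X := rfl
    show toK (σ.map (CnHom X X 1)) = 1
    rw [h, σ.map_id]; rfl
  have hune : ∀ X : Cn K n, u X ≠ 0 := by
    intro X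
    have h : u X * c j₀ X = 1 := by rw [hu]; rw [← hcmul X j₀ X, hcid]
    exact left_ne_zero_of_mul_eq_one h
  have hcdiv : ∀ X Y : Cn K n, c X Y = u X / u Y := by
    intro X Y
    rw [eq_div_iff (hune Y)]
    exact (hcmul X Y j₀).symm
  set a : Cn K n → K := fun i => toK (φ.hom.app i) with ha
  have hane : ∀ i : Cn K n, a i ≠ 0 := by
    intro i
    exact left_ne_zero_of_mul_eq_one
      (show a i * toK (φ.inv.app i) = 1 from congrArg toK (φ.hom_inv_id_app i))
  have key : ∀ i : Cn K n, a i * c (σ.obj i) (τ.obj i) = - a (σ.obj i) := by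
    intro i
    have h1 : φ.hom.app i = (a i) • (CnHom (σ.obj i) (τ.obj i) 1) := by
      show φ.hom.app i = a i • (1 : K)
      rw [smul_eq_mul, mul_one]; rfl
    have h2 := hσl.2 _ _ (a i) (CnHom (σ.obj i) (τ.obj i) 1)
    have h3 : toK (σ.map (φ.hom.app i)) = a i * c (σ.obj i) (τ.obj i) := by
      rw [h1, h2]; rfl
    rw [← h3, hskew i]
  -- take products over all objects
  have hprod : (∏ i : Fin n, (a i * c (σ.obj i) (τ.obj i)))
      = ∏ i : Fin n, (- a (σ.obj i)) :=
    Finset.prod_congr rfl fun i _ => key i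
  have hprodc : (∏ i : Fin n, c (σ.obj i) (τ.obj i)) = 1 := by
    have h1 : (∏ i : Fin n, u (σ.obj i)) = ∏ i : Fin n, u i :=
      Function.Bijective.prod_comp hσbij u
    have h2 : (∏ i : Fin n, u (τ.obj i)) = ∏ i : Fin n, u i :=
      Function.Bijective.prod_comp hτbij u
    have hprodu : (∏ i : Fin n, u i) ≠ 0 :=
      Finset.prod_ne_zero_iff.mpr fun i _ => hune i
    calc (∏ i : Fin n, c (σ.obj i) (τ.obj i))
        = ∏ i : Fin n, (u (σ.obj i) / u (τ.obj i)) :=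
          Finset.prod_congr rfl fun i _ => hcdiv _ _
      _ = (∏ i : Fin n, u (σ.obj i)) / (∏ i : Fin n, u (τ.obj i)) :=
          Finset.prod_div_distrib _ _
      _ = 1 := by rw [h1, h2, div_self hprodu]
  have hproda : (∏ i : Fin n, a (σ.obj i)) = ∏ i : Fin n, a i :=
    Function.Bijective.prod_comp hσbij a
  have hprodane : (∏ i : Fin n, a i) ≠ 0 :=
    Finset.prod_ne_zero_iff.mpr fun i _ => hane i
  have hfinal : (∏ i : Fin n, a i) = (-1 : K) ^ n * ∏ i : Fin n, a i := by
    calc (∏ i : Fin n, a i)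
        = (∏ i : Fin n, a i) * (∏ i : Fin n, c (σ.obj i) (τ.obj i)) := by
          rw [hprodc, mul_one]
      _ = ∏ i : Fin n, (a i * c (σ.obj i) (τ.obj i)) := Finset.prod_mul_distrib.symm
      _ = ∏ i : Fin n, (- a (σ.obj i)) := hprod
      _ = ∏ i : Fin n, ((-1 : K) * a (σ.obj i)) := by
          simp only [neg_one_mul]
      _ = (∏ i : Fin n, (-1 : K)) * ∏ i : Fin n, a (σ.obj i) :=
          Finset.prod_mul_distrib
      _ = (-1 : K) ^ n * ∏ i : Fin n, a i := by
          rw [Finset.prod_const, Finset.card_univ, Fintype.card_fin, hproda]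
  have hpow : ((-1 : K)) ^ n = 1 := by
    have := mul_right_cancel₀ hprodane
      (by rw [← hfinal, one_mul] : (1 : K) * (∏ i : Fin n, a i) = (-1 : K) ^ n * ∏ i : Fin n, a i)
    exact this.symm
  rcases Nat.even_or_odd n with he | ho
  · exact he
  · exfalso
    rw [ho.neg_one_pow] at hpow
    apply h2
    linear_combination - hpow
end
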